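/- arXiv:math/0203155 — 2 statements merged into one kernel-verified Lean document; each statement's English description precedes it below -/
import Mathlib

section
/- The bracket {f,g}_1 = x1[(∂f/∂x2 ∂g/∂x3 − ∂f/∂x3 ∂g/∂x2) + ε(∂f/∂x5 ∂g/∂x2 − ∂f/∂x2 ∂g/∂x5)] + x2[(∂f/∂x3 ∂g/∂x1 − ∂f/∂x1 ∂g/∂x3) + ε(∂f/∂x1 ∂g/∂x5 − ∂f/∂x5 ∂g/∂x1)] + ∂f/∂x5 ∂g/∂x4 − ∂f/∂x4 ∂g/∂x5 on smooth functions on ℝ^5 is antisymmetric and satisfies the Jacobi identity. -/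
noncomputable def pd (i : Fin 5) (f : (Fin 5 → ℝ) → ℝ) (x : Fin 5 → ℝ) : ℝ :=
  fderiv ℝ f x (Pi.single i 1)

noncomputable def bracket1 (ε : ℝ) (f g : (Fin 5 → ℝ) → ℝ) (x : Fin 5 → ℝ) : ℝ :=
  x 0 * ((pd 1 f x * pd 2 g x - pd 2 f x * pd 1 g x)
        + ε * (pd 4 f x * pd 1 g x - pd 1 f x * pd 4 g x))
  + x 1 * ((pd 2 f x * pd 0 g x - pd 0 f x * pd 2 g x)
        + ε * (pd 0 f x * pd 4 g x - pd 4 f x * pd 0 g x))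
  + pd 4 f x * pd 3 g x - pd 3 f x * pd 4 g x

noncomputable def bracket2 (f g : (Fin 5 → ℝ) → ℝ) (x : Fin 5 → ℝ) : ℝ :=
  x 0 * (pd 1 f x * pd 2 g x - pd 2 f x * pd 1 g x)
  + x 1 * (pd 2 f x * pd 0 g x - pd 0 f x * pd 2 g x)
  + pd 4 f x * pd 3 g x - pd 3 f x * pd 4 g x

lemma pd_contDiff {f : (Fin 5 → ℝ) → ℝ} (hf : ContDiff ℝ (⊤ : ℕ∞) f) (i : Fin 5) :
    ContDiff ℝ (⊤ : ℕ∞) (pd i f) :=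
  (hf.fderiv_right ((by simp))).clm_apply contDiff_const

@[fun_prop] lemma pd_contDiff' {f : (Fin 5 → ℝ) → ℝ} (i : Fin 5) (hf : ContDiff ℝ (⊤ : ℕ∞) f) :
    ContDiff ℝ (⊤ : ℕ∞) (pd i f) := pd_contDiff hf i

@[fun_prop] lemma pd_differentiable {f : (Fin 5 → ℝ) → ℝ} (i : Fin 5) (hf : ContDiff ℝ (⊤ : ℕ∞) f) :
    Differentiable ℝ (pd i f) := (pd_contDiff hf i).differentiable (by simp)

lemma pd_comm {f : (Fin 5 → ℝ) → ℝ} (hf : ContDiff ℝ (⊤ : ℕ∞) f) (i j : Fin 5) (x : Fin 5 → ℝ) :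
    pd j (pd i f) x = pd i (pd j f) x := by
  have hdf : DifferentiableAt ℝ (fderiv ℝ f) x :=
    ((hf.fderiv_right (m := 1) (by exact WithTop.coe_le_coe.mpr le_top)).differentiable one_ne_zero).differentiableAt
  have e : ∀ k l : Fin 5, pd l (pd k f) x
      = fderiv ℝ (fderiv ℝ f) x (Pi.single l 1) (Pi.single k 1) := by
    intro k l
    have hk : pd k f = fun y => (fderiv ℝ f y) (Pi.single k 1) := rfl
    rw [pd, hk, fderiv_clm_apply hdf (differentiableAt_const _)]
    simp
  rw [e, e]
  exact (hf.contDiffAt.isSymmSndFDerivAt (by norm_num; exact WithTop.coe_le_coe.mpr le_top)).eq _ _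

section calc_lemmas
variable {u v : (Fin 5 → ℝ) → ℝ} {x : Fin 5 → ℝ} {i : Fin 5}

lemma pd_add (hu : DifferentiableAt ℝ u x) (hv : DifferentiableAt ℝ v x) :
    pd i (fun y => u y + v y) x = pd i u x + pd i v x := by
  simp [pd, fderiv_fun_add hu hv]

lemma pd_sub (hu : DifferentiableAt ℝ u x) (hv : DifferentiableAt ℝ v x) :
    pd i (fun y => u y - v y) x = pd i u x - pd i v x := by
  simp [pd, fderiv_fun_sub hu hv]

lemma pd_mul (hu : DifferentiableAt ℝ u x) (hv : DifferentiableAt ℝ v x) :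
    pd i (fun y => u y * v y) x = pd i u x * v x + u x * pd i v x := by
  simp only [pd, fderiv_fun_mul hu hv, ContinuousLinearMap.add_apply,
    ContinuousLinearMap.smul_apply, smul_eq_mul]
  ring

lemma pd_const_mul (c : ℝ) (hu : DifferentiableAt ℝ u x) :
    pd i (fun y => c * u y) x = c * pd i u x := by
  simp [pd, fderiv_const_mul hu]

lemma pd_const (c : ℝ) : pd i (fun _ => c) x = 0 := by
  simp [pd]

lemma pd_coord (k : Fin 5) : pd i (fun y => y k) x = if k = i then 1 else 0 := by
  have : (fun y : Fin 5 → ℝ => y k) = (ContinuousLinearMap.proj k : (Fin 5 → ℝ) →L[ℝ] ℝ) := rfl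
  rw [pd, this, ContinuousLinearMap.fderiv]
  simp [Pi.single_apply]

end calc_lemmas

lemma pd_bracket1 (ε : ℝ) {g h : (Fin 5 → ℝ) → ℝ} (hg : ContDiff ℝ (⊤ : ℕ∞) g)
    (hh : ContDiff ℝ (⊤ : ℕ∞) h) (i : Fin 5) (x : Fin 5 → ℝ) :
    pd i (bracket1 ε g h) x =
      (if (0 : Fin 5) = i then 1 else 0) *
        ((pd 1 g x * pd 2 h x - pd 2 g x * pd 1 h x)
          + ε * (pd 4 g x * pd 1 h x - pd 1 g x * pd 4 h x))
      + x 0 * ((pd i (pd 1 g) x * pd 2 h x + pd 1 g x * pd i (pd 2 h) x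
              - (pd i (pd 2 g) x * pd 1 h x + pd 2 g x * pd i (pd 1 h) x))
          + ε * (pd i (pd 4 g) x * pd 1 h x + pd 4 g x * pd i (pd 1 h) x
              - (pd i (pd 1 g) x * pd 4 h x + pd 1 g x * pd i (pd 4 h) x)))
      + (if (1 : Fin 5) = i then 1 else 0) *
        ((pd 2 g x * pd 0 h x - pd 0 g x * pd 2 h x)
          + ε * (pd 0 g x * pd 4 h x - pd 4 g x * pd 0 h x))
      + x 1 * ((pd i (pd 2 g) x * pd 0 h x + pd 2 g x * pd i (pd 0 h) x
              - (pd i (pd 0 g) x * pd 2 h x + pd 0 g x * pd i (pd 2 h) x))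
          + ε * (pd i (pd 0 g) x * pd 4 h x + pd 0 g x * pd i (pd 4 h) x
              - (pd i (pd 4 g) x * pd 0 h x + pd 4 g x * pd i (pd 0 h) x)))
      + (pd i (pd 4 g) x * pd 3 h x + pd 4 g x * pd i (pd 3 h) x)
      - (pd i (pd 3 g) x * pd 4 h x + pd 3 g x * pd i (pd 4 h) x) := by
  have e : bracket1 ε g h = fun y =>
      y 0 * ((pd 1 g y * pd 2 h y - pd 2 g y * pd 1 h y)
            + ε * (pd 4 g y * pd 1 h y - pd 1 g y * pd 4 h y))
      + y 1 * ((pd 2 g y * pd 0 h y - pd 0 g y * pd 2 h y)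
            + ε * (pd 0 g y * pd 4 h y - pd 4 g y * pd 0 h y))
      + pd 4 g y * pd 3 h y - pd 3 g y * pd 4 h y := rfl
  rw [e]
  simp (disch := fun_prop) only [pd_add, pd_sub, pd_mul, pd_const_mul, pd_const, pd_coord]
  ring

set_option maxHeartbeats 2000000 in
theorem bracket1_antisymm_jacobi (ε : ℝ) :
    (∀ f g : (Fin 5 → ℝ) → ℝ, ContDiff ℝ (⊤ : ℕ∞) f → ContDiff ℝ (⊤ : ℕ∞) g →
      ∀ x, bracket1 ε f g x = - bracket1 ε g f x) ∧
    (∀ f g h : (Fin 5 → ℝ) → ℝ, ContDiff ℝ (⊤ : ℕ∞) f → ContDiff ℝ (⊤ : ℕ∞) g → ContDiff ℝ (⊤ : ℕ∞) h →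
      ∀ x, bracket1 ε f (bracket1 ε g h) x + bracket1 ε g (bracket1 ε h f) x
        + bracket1 ε h (bracket1 ε f g) x = 0) := by
  constructor
  · intro f g hf hg x
    simp only [bracket1]; ring
  · intro f g h hf hg hh x
    simp only [bracket1]
    rw [pd_bracket1 ε hg hh 0 x, pd_bracket1 ε hg hh 1 x, pd_bracket1 ε hg hh 2 x,
        pd_bracket1 ε hg hh 3 x, pd_bracket1 ε hg hh 4 x,
        pd_bracket1 ε hh hf 0 x, pd_bracket1 ε hh hf 1 x, pd_bracket1 ε hh hf 2 x,
        pd_bracket1 ε hh hf 3 x, pd_bracket1 ε hh hf 4 x,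
        pd_bracket1 ε hf hg 0 x, pd_bracket1 ε hf hg 1 x, pd_bracket1 ε hf hg 2 x,
        pd_bracket1 ε hf hg 3 x, pd_bracket1 ε hf hg 4 x]
    have e00 : (if (0:Fin 5) = 0 then (1:ℝ) else 0) = 1 := if_pos rfl
    have e01 : (if (0:Fin 5) = 1 then (1:ℝ) else 0) = 0 := if_neg (by decide)
    have e02 : (if (0:Fin 5) = 2 then (1:ℝ) else 0) = 0 := if_neg (by decide)
    have e03 : (if (0:Fin 5) = 3 then (1:ℝ) else 0) = 0 := if_neg (by decide)
    have e04 : (if (0:Fin 5) = 4 then (1:ℝ) else 0) = 0 := if_neg (by decide)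
    have e10 : (if (1:Fin 5) = 0 then (1:ℝ) else 0) = 0 := if_neg (by decide)
    have e11 : (if (1:Fin 5) = 1 then (1:ℝ) else 0) = 1 := if_pos rfl
    have e12 : (if (1:Fin 5) = 2 then (1:ℝ) else 0) = 0 := if_neg (by decide)
    have e13 : (if (1:Fin 5) = 3 then (1:ℝ) else 0) = 0 := if_neg (by decide)
    have e14 : (if (1:Fin 5) = 4 then (1:ℝ) else 0) = 0 := if_neg (by decide)
    simp only [e00,e01,e02,e03,e04,e10,e11,e12,e13,e14,one_mul,zero_mul,mul_zero,mul_one,add_zero,zero_add,sub_zero,zero_sub]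
    rw [pd_comm hf 0 1 x, pd_comm hf 0 2 x, pd_comm hf 0 3 x, pd_comm hf 0 4 x,
        pd_comm hf 1 2 x, pd_comm hf 1 3 x, pd_comm hf 1 4 x,
        pd_comm hf 2 3 x, pd_comm hf 2 4 x, pd_comm hf 3 4 x,
        pd_comm hg 0 1 x, pd_comm hg 0 2 x, pd_comm hg 0 3 x, pd_comm hg 0 4 x,
        pd_comm hg 1 2 x, pd_comm hg 1 3 x, pd_comm hg 1 4 x,
        pd_comm hg 2 3 x, pd_comm hg 2 4 x, pd_comm hg 3 4 x,
        pd_comm hh 0 1 x, pd_comm hh 0 2 x, pd_comm hh 0 3 x, pd_comm hh 0 4 x,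
        pd_comm hh 1 2 x, pd_comm hh 1 3 x, pd_comm hh 1 4 x,
        pd_comm hh 2 3 x, pd_comm hh 2 4 x, pd_comm hh 3 4 x]
    ring
end

section
/- The linear map Φ : ℝ^5 → ℝ^5 given by Φ(x1,x2,x3,x4,x5) = (x1, x2, x3, x4, εx3 + x5) is a Poisson diffeomorphism from (ℝ^5, {·,·}_1) to (ℝ^5, {·,·}_2), i.e., Φ is a linear isomorphism and {f∘Φ, g∘Φ}_1 = {f,g}_2 ∘ Φ for all smooth f, g. -/
noncomputable def Tmap (e : ℝ) : (Fin 5 → ℝ) →ₗ[ℝ] (Fin 5 → ℝ) where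
  toFun x := ![x 0, x 1, x 2, x 3, e * x 2 + x 4]
  map_add' x y := by funext i; fin_cases i <;> simp <;> ring
  map_smul' c x := by funext i; fin_cases i <;> simp <;> ring

noncomputable def Phi (e : ℝ) : (Fin 5 → ℝ) ≃ₗ[ℝ] (Fin 5 → ℝ) :=
  LinearEquiv.ofLinear (Tmap e) (Tmap (-e))
    (by ext x i; fin_cases i <;> simp [Tmap] <;> ring)
    (by ext x i; fin_cases i <;> simp [Tmap] <;> ring)

lemma pd_comp (e : ℝ) (f : (Fin 5 → ℝ) → ℝ) (hf : ContDiff ℝ (⊤ : ℕ∞) f) (x : Fin 5 → ℝ)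
    (i : Fin 5) :
    pd i (f ∘ Phi e) x = fderiv ℝ f (Phi e x) ((Phi e) (Pi.single i 1)) := by
  set L := LinearMap.toContinuousLinearMap (Tmap e) with hL
  have hfun : (f ∘ Phi e) = f ∘ L := rfl
  have hx : (Phi e) x = L x := rfl
  have hs : (Phi e) (Pi.single i 1) = L (Pi.single i 1) := rfl
  rw [pd, hfun, hx, hs,
    fderiv_comp (x := x) ((hf.differentiable (by simp)).differentiableAt) L.differentiableAt,
    L.fderiv]
  rfl

theorem phi_poisson_diffeo (ε : ℝ) :
    ∃ Φ : (Fin 5 → ℝ) ≃ₗ[ℝ] (Fin 5 → ℝ),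
      (∀ x : Fin 5 → ℝ, Φ x = ![x 0, x 1, x 2, x 3, ε * x 2 + x 4]) ∧
      (∀ f g : (Fin 5 → ℝ) → ℝ, ContDiff ℝ (⊤ : ℕ∞) f → ContDiff ℝ (⊤ : ℕ∞) g →
        ∀ x, bracket1 ε (f ∘ Φ) (g ∘ Φ) x = bracket2 f g (Φ x)) := by
  refine ⟨Phi ε, fun x => rfl, fun f g hf hg x => ?_⟩
  have h0 : (Phi ε) (Pi.single (0 : Fin 5) 1) = Pi.single (0 : Fin 5) 1 := by
    funext j; fin_cases j <;> simp [Phi, Tmap]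
  have h1 : (Phi ε) (Pi.single (1 : Fin 5) 1) = Pi.single (1 : Fin 5) 1 := by
    funext j; fin_cases j <;> simp [Phi, Tmap]
  have h3 : (Phi ε) (Pi.single (3 : Fin 5) 1) = Pi.single (3 : Fin 5) 1 := by
    funext j; fin_cases j <;> simp [Phi, Tmap]
  have h4 : (Phi ε) (Pi.single (4 : Fin 5) 1) = Pi.single (4 : Fin 5) 1 := by
    funext j; fin_cases j <;> simp [Phi, Tmap]
  have h2 : (Phi ε) (Pi.single (2 : Fin 5) 1)
      = (Pi.single (2 : Fin 5) 1 : Fin 5 → ℝ) + ε • (Pi.single (4 : Fin 5) 1 : Fin 5 → ℝ) := by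
    funext j; fin_cases j <;> simp [Phi, Tmap]
  have key : ∀ (h : (Fin 5 → ℝ) → ℝ), ContDiff ℝ (⊤ : ℕ∞) h → ∀ i : Fin 5,
      pd i (h ∘ Phi ε) x = fderiv ℝ h (Phi ε x) ((Phi ε) (Pi.single i 1)) :=
    fun h hh i => pd_comp ε h hh x i
  have e0 : ((Phi ε) x) 0 = x 0 := rfl
  have e1 : ((Phi ε) x) 1 = x 1 := rfl
  simp only [bracket1, bracket2, key f hf, key g hg, h0, h1, h2, h3, h4, e0, e1,
    map_add, map_smul, smul_eq_mul]
  simp only [pd]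
  ring
end
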